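/- Let Θ_i, Θ_j, Θ_k ∈ [0, π) satisfy cos Θ_i + cos Θ_j cos Θ_k ≥ 0, cos Θ_j + cos Θ_k cos Θ_i ≥ 0, and cos Θ_k + cos Θ_i cos Θ_j ≥ 0. Then Θ_i + Θ_j ≤ π, Θ_j + Θ_k ≤ π, and Θ_k + Θ_i ≤ π. -/

import Mathlib

/-! Since `Θ < π`, every `1 + cos Θ` is positive. Adding two of the cofactor conditions gives
`(cos Θi + cos Θj) (1 + cos Θk) ≥ 0`, hence `cos Θj ≥ -cos Θi = cos (π - Θi)`, and as cosine is
decreasing on `[0, π]` this is `Θj ≤ π - Θi`. -/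

open Real

lemma add_nonneg_of_add_mul_nonneg {R : Type*} [CommRing R] [LinearOrder R]
    [IsStrictOrderedRing R] {x y z : R} (hz : 0 < 1 + z) (hx : 0 ≤ x + y * z) (hy : 0 ≤ y + z * x) :
    0 ≤ x + y := by
  have hprod : (x + y) * (1 + z) = (x + y * z) + (y + z * x) := by ring
  exact nonneg_of_mul_nonneg_left (hprod ▸ add_nonneg hx hy) hz

lemma Real.neg_one_lt_cos_of_mem_Ico {θ : ℝ} (hθ : θ ∈ Set.Ico 0 π) : -1 < cos θ := by
  simpa only [cos_pi] using
    strictAntiOn_cos ⟨hθ.1, hθ.2.le⟩ ⟨pi_pos.le, le_rfl⟩ hθ.2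

lemma Real.add_le_pi_of_cos_add_cos_nonneg {a b : ℝ} (ha : a ∈ Set.Icc 0 π)
    (hb : b ∈ Set.Icc 0 π) (h : 0 ≤ cos a + cos b) : a + b ≤ π := by
  have hπa : π - a ∈ Set.Icc 0 π := ⟨by linarith [ha.2], by linarith [ha.1]⟩
  have hcos : cos (π - a) ≤ cos b := by rw [cos_pi_sub]; linarith
  linarith [(strictAntiOn_cos.le_iff_ge hπa hb).mp hcos]

lemma Real.add_le_pi_of_cos_add_cos_mul_cos_nonneg {a b c : ℝ} (ha : a ∈ Set.Ico 0 π)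
    (hb : b ∈ Set.Ico 0 π) (hc : c ∈ Set.Ico 0 π) (hγa : 0 ≤ cos a + cos b * cos c)
    (hγb : 0 ≤ cos b + cos c * cos a) : a + b ≤ π :=
  add_le_pi_of_cos_add_cos_nonneg (Set.Ico_subset_Icc_self ha) (Set.Ico_subset_Icc_self hb)
    (add_nonneg_of_add_mul_nonneg (by linarith [neg_one_lt_cos_of_mem_Ico hc]) hγa hγb)

theorem pairwise_angle_sums_le_pi_of_gram_cofactors_nonneg
    (Θi Θj Θk : ℝ)
    (hi : Θi ∈ Set.Ico 0 π) (hj : Θj ∈ Set.Ico 0 π) (hk : Θk ∈ Set.Ico 0 π)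
    (hγi : 0 ≤ Real.cos Θi + Real.cos Θj * Real.cos Θk)
    (hγj : 0 ≤ Real.cos Θj + Real.cos Θk * Real.cos Θi)
    (hγk : 0 ≤ Real.cos Θk + Real.cos Θi * Real.cos Θj) :
    Θi + Θj ≤ π ∧ Θj + Θk ≤ π ∧ Θk + Θi ≤ π :=
  ⟨add_le_pi_of_cos_add_cos_mul_cos_nonneg hi hj hk hγi hγj,
    add_le_pi_of_cos_add_cos_mul_cos_nonneg hj hk hi hγj hγk,
    add_le_pi_of_cos_add_cos_mul_cos_nonneg hk hi hj hγk hγi⟩
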